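/- For all natural numbers a and b, m_{a,b} ∘ δ_{a,b} = [a+b choose a]_q · id_{W_{a+b}}. (This is Lemma 'laura' — the first relation in (mergesplit) of Theorem B — realized on quantum exterior powers via the functor Σ_n of Theorem C.) -/

import Mathlib

open scoped BigOperators
open TensorProduct

/-- The variable `q` in the field `K = ℚ(q)` of rational functions. -/
noncomputable def q : RatFunc ℚ := RatFunc.X

/-- `W n r` is the free `ℚ(q)`-module with basis `{v_I : I ⊆ {1,…,n}, |I| = r}`,
realizing the `r`-th quantum exterior power of the natural module of quantum `GL_n`. -/
abbrev W (n r : ℕ) : Type := {I : Finset (Fin n) // I.card = r} →₀ RatFunc ℚ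

/-- The basis vector `v_I` of `W n r`. -/
noncomputable def v {n r : ℕ} (I : {I : Finset (Fin n) // I.card = r}) : W n r :=
  Finsupp.single I 1

/-- `inv(I,J) = #{(i,j) ∈ I × J : i > j}`. -/
def invCount {n : ℕ} (I J : Finset (Fin n)) : ℕ :=
  ((I ×ˢ J).filter fun p => p.2 < p.1).card

/-- The canonical identification `W n r ≃ W n s` for `r = s`. -/
noncomputable def castW (n : ℕ) {r s : ℕ} (h : r = s) : W n r ≃ₗ[RatFunc ℚ] W n s :=
  Finsupp.domLCongr (Equiv.subtypeEquivRight fun I => by rw [h])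

/-- The merge map `m_{a,b} : W_a ⊗ W_b → W_{a+b}`,
`v_I ⊗ v_J ↦ (−q)^{inv(I,J)} v_{I∪J}` for `I ∩ J = ∅` (and `0` otherwise). -/
noncomputable def merge (n a b : ℕ) : W n a ⊗[RatFunc ℚ] W n b →ₗ[RatFunc ℚ] W n (a + b) :=
  TensorProduct.lift <|
    Finsupp.lift (W n b →ₗ[RatFunc ℚ] W n (a + b)) (RatFunc ℚ)
      {I : Finset (Fin n) // I.card = a} fun I =>
        Finsupp.lift (W n (a + b)) (RatFunc ℚ) {J : Finset (Fin n) // J.card = b} fun J =>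
          if h : Disjoint I.1 J.1 then
            ((-q) ^ invCount I.1 J.1) •
              v ⟨I.1 ∪ J.1, by rw [Finset.card_union_of_disjoint h, I.2, J.2]⟩
          else 0

/-- The split map `δ_{a,b} : W_{a+b} → W_a ⊗ W_b`,
`v_K ↦ q^{−ab} ∑_{I ⊆ K, |I| = a} (−q)^{inv(I, K∖I)} v_I ⊗ v_{K∖I}`. -/
noncomputable def split (n a b : ℕ) : W n (a + b) →ₗ[RatFunc ℚ] W n a ⊗[RatFunc ℚ] W n b :=
  Finsupp.lift (W n a ⊗[RatFunc ℚ] W n b) (RatFunc ℚ)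
    {I : Finset (Fin n) // I.card = a + b} fun Kk =>
      (q ^ (-((a : ℤ) * (b : ℤ)))) •
        ∑ I ∈ (Kk.1.powersetCard a).attach,
          ((-q) ^ invCount I.1 (Kk.1 \ I.1)) •
            (v ⟨I.1, (Finset.mem_powersetCard.mp I.2).2⟩ ⊗ₜ[RatFunc ℚ]
              v ⟨Kk.1 \ I.1, by
                have h := Finset.mem_powersetCard.mp I.2
                rw [Finset.card_sdiff_of_subset h.1, h.2, Kk.2]; omega⟩)

/-- The balanced quantum integer `[n]_q = (q^n − q^{−n})/(q − q⁻¹)`. -/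
noncomputable def qint (n : ℤ) : RatFunc ℚ := (q ^ n - q ^ (-n)) / (q - q⁻¹)

/-- The quantum factorial `[s]_q! = ∏_{i=1}^s [i]_q`. -/
noncomputable def qfact (s : ℕ) : RatFunc ℚ := ∏ i ∈ Finset.range s, qint ((i : ℤ) + 1)

/-- The balanced quantum binomial coefficient
`[m choose s]_q = ([m]_q [m−1]_q ⋯ [m−s+1]_q)/[s]_q!`. -/
noncomputable def qbinom (m : ℤ) (s : ℕ) : RatFunc ℚ :=
  (∏ i ∈ Finset.range s, qint (m - (i : ℤ))) / qfact s


/-! ### Auxiliary lemmas -/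

lemma hq0 : q ≠ 0 := RatFunc.X_ne_zero

lemma q_pow_ne_one {k : ℕ} (hk : 0 < k) : q ^ k ≠ 1 := by
  intro h
  have : (RatFunc.X : RatFunc ℚ) ^ k = 1 := h
  rw [show (RatFunc.X : RatFunc ℚ) = algebraMap (Polynomial ℚ) _ Polynomial.X from rfl,
    ← map_pow, ← map_one (algebraMap (Polynomial ℚ) (RatFunc ℚ))] at this
  have := RatFunc.algebraMap_injective (K := ℚ) this
  have := congrArg Polynomial.natDegree this
  simp [Polynomial.natDegree_X_pow] at this
  omega

lemma hden : q - q⁻¹ ≠ 0 := by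
  intro h
  have h1 : q = q⁻¹ := sub_eq_zero.mp h
  have h2 : q ^ 2 = 1 := by rw [pow_two]; nth_rewrite 2 [h1]; exact mul_inv_cancel₀ hq0
  exact q_pow_ne_one two_pos h2

lemma qint_ne_zero {k : ℤ} (hk : 0 < k) : qint k ≠ 0 := by
  apply div_ne_zero _ hden
  intro h
  have h1 : q ^ k = q ^ (-k) := sub_eq_zero.mp h
  have h2 : q ^ (2 * k) = 1 := by
    rw [two_mul, zpow_add₀ hq0]
    nth_rewrite 1 [h1]
    rw [← zpow_add₀ hq0]
    simp
  have h3 : q ^ ((2 * k).toNat) = 1 := by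
    rw [← zpow_natCast, Int.toNat_of_nonneg (by omega)]; exact h2
  exact q_pow_ne_one (by omega) h3

lemma qfact_ne_zero (s : ℕ) : qfact s ≠ 0 := by
  unfold qfact
  exact Finset.prod_ne_zero_iff.mpr fun i _ => qint_ne_zero (k := (i : ℤ) + 1) (by positivity)

lemma qint_add (x y : ℤ) : qint (x + y) = q ^ y * qint x + q ^ (-x) * qint y := by
  unfold qint
  rw [← mul_div_assoc, ← mul_div_assoc, ← add_div]
  congr 1
  rw [zpow_add₀ hq0, neg_add, zpow_add₀ hq0]
  ring

lemma qbinom_zero (m : ℤ) : qbinom m 0 = 1 := by simp [qbinom, qfact]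

lemma qfact_succ (s : ℕ) : qfact (s + 1) = qfact s * qint ((s : ℤ) + 1) := by
  unfold qfact; rw [Finset.prod_range_succ]

lemma prod_desc (a : ℕ) : ∏ i ∈ Finset.range a, qint ((a : ℤ) - (i : ℤ)) = qfact a := by
  induction a with
  | zero => simp [qfact]
  | succ c ih =>
    rw [Finset.prod_range_succ', qfact_succ, ← ih]
    rw [Finset.prod_congr rfl (fun i _ => by congr 1; push_cast; ring :
      ∀ i ∈ Finset.range c, qint ((↑(c+1):ℤ) - ↑(i+1)) = qint ((c:ℤ) - ↑i))]
    congr 1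

lemma qbinom_self (a : ℕ) : qbinom (a : ℤ) a = 1 := by
  unfold qbinom
  rw [prod_desc, div_self (qfact_ne_zero a)]

lemma qbinom_pascal (c b : ℕ) :
    qbinom ((c : ℤ) + 1 + (b : ℤ)) (c + 1)
      = q ^ b * qbinom ((c : ℤ) + (b : ℤ)) c
        + (q ^ (c + 1))⁻¹ * qbinom ((c : ℤ) + (b : ℤ)) (c + 1) := by
  have hnum : ∏ i ∈ Finset.range (c + 1), qint ((c : ℤ) + 1 + b - (i : ℤ))
      = (∏ i ∈ Finset.range c, qint ((c : ℤ) + b - (i : ℤ))) * qint ((c : ℤ) + 1 + b) := by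
    rw [Finset.prod_range_succ']
    rw [Finset.prod_congr rfl (fun i _ => by congr 1; push_cast; ring :
      ∀ i ∈ Finset.range c, qint ((c:ℤ) + 1 + ↑b - ↑(i+1)) = qint ((c:ℤ) + ↑b - ↑i))]
    congr 1
  have hnum2 : ∏ i ∈ Finset.range (c + 1), qint ((c : ℤ) + b - (i : ℤ))
      = (∏ i ∈ Finset.range c, qint ((c : ℤ) + b - (i : ℤ))) * qint (b : ℤ) := by
    rw [Finset.prod_range_succ]
    congr 2
    ring
  have hqadd : qint ((c : ℤ) + 1 + b)
      = q ^ b * qint ((c : ℤ) + 1) + (q ^ (c + 1))⁻¹ * qint (b : ℤ) := by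
    rw [qint_add ((c : ℤ) + 1) (b : ℤ), zpow_natCast,
      show (-((c:ℤ)+1)) = -((c+1 : ℕ) : ℤ) by push_cast; ring, zpow_neg, zpow_natCast]
  unfold qbinom
  rw [hnum, hnum2, qfact_succ, hqadd]
  have h1 : qfact c ≠ 0 := qfact_ne_zero c
  have h2 : qint ((c : ℤ) + 1) ≠ 0 := qint_ne_zero (by positivity)
  have h3 : (q ^ (c + 1)) ≠ 0 := pow_ne_zero _ hq0
  field_simp

lemma qbinom_pascal' (c d : ℕ) :
    qbinom ((↑(c+1) : ℤ) + (↑(d+1) : ℤ)) (c + 1)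
      = q ^ (d + 1) * qbinom ((c : ℤ) + (↑(d+1) : ℤ)) c
        + (q ^ (c + 1))⁻¹ * qbinom ((c : ℤ) + (↑(d+1) : ℤ)) (c + 1) := by
  rw [show ((↑(c+1) : ℤ) + (↑(d+1) : ℤ)) = (c : ℤ) + 1 + (↑(d+1) : ℤ) by push_cast; ring]
  exact qbinom_pascal c (d + 1)

lemma invCount_empty_left {n : ℕ} (J : Finset (Fin n)) : invCount ∅ J = 0 := by
  simp [invCount]

lemma invCount_empty_right {n : ℕ} (I : Finset (Fin n)) : invCount I ∅ = 0 := by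
  simp [invCount]

lemma invCount_insert_left {n : ℕ} {x : Fin n} {I J : Finset (Fin n)} (hx : x ∉ I) :
    invCount (insert x I) J = (J.filter (fun j => j < x)).card + invCount I J := by
  unfold invCount
  rw [Finset.insert_eq, Finset.union_product, Finset.filter_union,
    Finset.card_union_of_disjoint, Finset.singleton_product, Finset.filter_map,
    Finset.card_map]
  · rfl
  · rw [Finset.disjoint_left]
    rintro ⟨p1, p2⟩ hp hp'
    have h1 := Finset.mem_product.mp (Finset.mem_of_mem_filter _ hp)
    have h2 := Finset.mem_product.mp (Finset.mem_of_mem_filter _ hp')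
    simp only [Finset.mem_singleton] at h1
    exact hx (h1.1 ▸ h2.1)

lemma invCount_insert_right {n : ℕ} {x : Fin n} {I J : Finset (Fin n)} (hx : x ∉ J) :
    invCount I (insert x J) = (I.filter (fun i => x < i)).card + invCount I J := by
  unfold invCount
  rw [Finset.insert_eq, Finset.product_union, Finset.filter_union,
    Finset.card_union_of_disjoint, Finset.product_singleton, Finset.filter_map,
    Finset.card_map]
  · rfl
  · rw [Finset.disjoint_left]
    rintro ⟨p1, p2⟩ hp hp'
    have h1 := Finset.mem_product.mp (Finset.mem_of_mem_filter _ hp)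
    have h2 := Finset.mem_product.mp (Finset.mem_of_mem_filter _ hp')
    simp only [Finset.mem_singleton] at h1
    exact hx (h1.2 ▸ h2.2)

lemma key (n : ℕ) (N : ℕ) : ∀ (a b : ℕ) (K : Finset (Fin n)), a + b = N → K.card = a + b →
    ∑ I ∈ K.powersetCard a, q ^ (2 * invCount I (K \ I))
      = q ^ (a * b) * qbinom ((a : ℤ) + (b : ℤ)) a := by
  induction N with
  | zero =>
    intro a b K hab hK
    have ha : a = 0 := by omega
    have hb : b = 0 := by omega
    subst ha; subst hb
    simp [Finset.powersetCard_zero, invCount_empty_left, qbinom_zero]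
  | succ N ih =>
    intro a b K hab hK
    match a, b with
    | 0, b =>
      simp [Finset.powersetCard_zero, invCount_empty_left, qbinom_zero]
    | a + 1, 0 =>
      rw [Nat.add_zero] at hK
      rw [show K.powersetCard (a+1) = {K} from by rw [← hK]; exact Finset.powersetCard_self K,
        Finset.sum_singleton, Finset.sdiff_self,
        invCount_empty_right, Nat.mul_zero, pow_zero, Nat.mul_zero, pow_zero, one_mul,
        show ((↑(a+1) : ℤ) + (0:ℕ) : ℤ) = ((a+1 : ℕ) : ℤ) by push_cast; ring,
        qbinom_self]
    | c + 1, d + 1 =>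
      have hne : K.Nonempty := by rw [← Finset.card_pos]; omega
      set m := K.max' hne with hm
      set K' := K.erase m with hKe
      have hmK : m ∈ K := K.max'_mem hne
      have hmK' : m ∉ K' := Finset.notMem_erase _ _
      have hins : insert m K' = K := Finset.insert_erase hmK
      have hcard' : K'.card = N := by
        rw [hKe, Finset.card_erase_of_mem hmK]; omega
      have hlt : ∀ x ∈ K', x < m := fun x hx =>
        lt_of_le_of_ne (K.le_max' x (Finset.mem_of_mem_erase hx)) (Finset.ne_of_mem_erase hx)
      rw [← hins, Finset.powersetCard_succ_insert hmK']
      have hdisj : Disjoint (K'.powersetCard (c+1)) ((K'.powersetCard c).image (insert m)) := by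
        rw [Finset.disjoint_left]
        intro I hI hI2
        have h1 : I ⊆ K' := (Finset.mem_powersetCard.mp hI).1
        obtain ⟨I', _, rfl⟩ := Finset.mem_image.mp hI2
        exact hmK' (h1 (Finset.mem_insert_self m I'))
      rw [Finset.sum_union hdisj]
      rw [Finset.sum_image (fun I hI J hJ hIJ => by
        have hmI : m ∉ I := fun h => hmK' ((Finset.mem_powersetCard.mp hI).1 h)
        have hmJ : m ∉ J := fun h => hmK' ((Finset.mem_powersetCard.mp hJ).1 h)
        rw [← Finset.erase_insert hmI, ← Finset.erase_insert hmJ, hIJ])]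
      have e1 : ∀ I ∈ K'.powersetCard (c+1),
          q ^ (2 * invCount I (insert m K' \ I)) = q ^ (2 * invCount I (K' \ I)) := by
        intro I hI
        have hsub : I ⊆ K' := (Finset.mem_powersetCard.mp hI).1
        have hmI : m ∉ I := fun h => hmK' (hsub h)
        rw [Finset.insert_sdiff_of_notMem _ hmI,
          invCount_insert_right (fun h => hmK' (Finset.mem_sdiff.mp h).1),
          Finset.filter_false_of_mem (fun i hi => not_lt.mpr (hlt i (hsub hi)).le),
          Finset.card_empty, zero_add]
      have e2 : ∀ I' ∈ K'.powersetCard c,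
          q ^ (2 * invCount (insert m I') (insert m K' \ insert m I'))
            = q ^ (2 * (d + 1)) * q ^ (2 * invCount I' (K' \ I')) := by
        intro I' hI'
        have hsub : I' ⊆ K' := (Finset.mem_powersetCard.mp hI').1
        have hcI : I'.card = c := (Finset.mem_powersetCard.mp hI').2
        have hmI : m ∉ I' := fun h => hmK' (hsub h)
        have hsd : insert m K' \ insert m I' = K' \ I' := by
          ext x
          simp only [Finset.mem_sdiff, Finset.mem_insert, not_or]
          constructor
          · rintro ⟨h1 | h1, h2, h3⟩
            · exact absurd h1 h2
            · exact ⟨h1, h3⟩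
          · rintro ⟨h1, h2⟩
            exact ⟨Or.inr h1, fun h => hmK' (h ▸ h1), h2⟩
        rw [hsd, invCount_insert_left hmI,
          Finset.filter_true_of_mem (fun j hj => hlt j (Finset.mem_sdiff.mp hj).1),
          Finset.card_sdiff_of_subset hsub, hcard', hcI,
          show N - c = d + 1 by omega, Nat.mul_add, pow_add]
      rw [Finset.sum_congr rfl e1, Finset.sum_congr rfl e2, ← Finset.mul_sum]
      rw [ih (c+1) d K' (by omega) (by omega), ih c (d+1) K' (by omega) (by omega)]
      rw [qbinom_pascal' c d,
        show ((↑(c+1) : ℤ) + (↑d : ℤ)) = ((c : ℤ) + (↑(d+1) : ℤ)) by push_cast; ring]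
      have h3 : (q : RatFunc ℚ) ^ (c + 1) ≠ 0 := pow_ne_zero _ hq0
      field_simp
      ring



lemma merge_vv {n a b : ℕ} (I : {I : Finset (Fin n) // I.card = a})
    (J : {J : Finset (Fin n) // J.card = b}) (h : Disjoint I.1 J.1) :
    merge n a b (v I ⊗ₜ[RatFunc ℚ] v J)
      = ((-q) ^ invCount I.1 J.1) •
          v ⟨I.1 ∪ J.1, by rw [Finset.card_union_of_disjoint h, I.2, J.2]⟩ := by
  unfold merge v
  rw [TensorProduct.lift.tmul]
  rw [Finsupp.lift_apply, Finsupp.sum_single_index (by simp), one_smul,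
    Finsupp.lift_apply, Finsupp.sum_single_index (by simp), one_smul, dif_pos h]

/-- Lemma `laura` (the first relation in (mergesplit) of Theorem B, realized on quantum
exterior powers via the functor `Σ_n` of Theorem C):
`m_{a,b} ∘ δ_{a,b} = [a+b choose a]_q · id`. -/
theorem laura (n a b : ℕ) :
    merge n a b ∘ₗ split n a b = qbinom ((a : ℤ) + (b : ℤ)) a • LinearMap.id := by
  apply Finsupp.lhom_ext
  intro K c
  rw [LinearMap.comp_apply]
  rw [show split n a b (Finsupp.single K c)
      = c • ((q ^ (-((a : ℤ) * (b : ℤ)))) •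
        ∑ I ∈ (K.1.powersetCard a).attach,
          ((-q) ^ invCount I.1 (K.1 \ I.1)) •
            (v ⟨I.1, (Finset.mem_powersetCard.mp I.2).2⟩ ⊗ₜ[RatFunc ℚ]
              v ⟨K.1 \ I.1, by
                have h := Finset.mem_powersetCard.mp I.2
                rw [Finset.card_sdiff_of_subset h.1, h.2, K.2]; omega⟩)) from by
    rw [split, Finsupp.lift_apply, Finsupp.sum_single_index (by simp)]]
  rw [map_smul, map_smul, map_sum]
  have hterm : ∀ I : {x // x ∈ K.1.powersetCard a},
      merge n a b (((-q) ^ invCount I.1 (K.1 \ I.1)) •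
        (v ⟨I.1, (Finset.mem_powersetCard.mp I.2).2⟩ ⊗ₜ[RatFunc ℚ]
          v ⟨K.1 \ I.1, by
            have h := Finset.mem_powersetCard.mp I.2
            rw [Finset.card_sdiff_of_subset h.1, h.2, K.2]; omega⟩))
      = (q ^ (2 * invCount I.1 (K.1 \ I.1))) • v K := by
    intro I
    have hsub : I.1 ⊆ K.1 := (Finset.mem_powersetCard.mp I.2).1
    have hd : Disjoint I.1 (K.1 \ I.1) := Finset.disjoint_sdiff
    rw [map_smul, merge_vv _ _ hd]
    rw [show (⟨I.1 ∪ (K.1 \ I.1), _⟩ : {I : Finset (Fin n) // I.card = a + b}) = K from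
      Subtype.ext (Finset.union_sdiff_of_subset hsub)]
    rw [smul_smul, ← pow_add, show invCount I.1 (K.1 \ I.1) + invCount I.1 (K.1 \ I.1)
        = 2 * invCount I.1 (K.1 \ I.1) from by ring, pow_mul, neg_sq, ← pow_mul]
  rw [Finset.sum_congr rfl (fun I _ => hterm I)]
  rw [← Finset.sum_smul]
  rw [Finset.sum_attach (K.1.powersetCard a) (fun I => q ^ (2 * invCount I (K.1 \ I)))]
  rw [key n (a + b) a b K.1 rfl K.2]
  rw [LinearMap.smul_apply, LinearMap.id_apply]
  rw [smul_smul, smul_smul]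
  rw [show (Finsupp.single K c) = c • v K from by
    rw [v, Finsupp.smul_single, smul_eq_mul, mul_one], smul_smul]
  congr 1
  have h1 : q ^ (-((a : ℤ) * (b : ℤ))) * q ^ (((a * b : ℕ) : ℤ)) = 1 := by
    rw [← zpow_add₀ hq0, show (-((a : ℤ) * (b : ℤ)) + ((a * b : ℕ) : ℤ)) = 0 from by
      push_cast; ring, zpow_zero]
  rw [← zpow_natCast q (a * b)]
  linear_combination (c * qbinom ((a : ℤ) + (b : ℤ)) a) * h1
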